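/- Let $G$ be a connected graph of order $n \ge 4$ and let $k \ge 2$ be an integer. Then $\dim_k(G) = n-2$ if and only if $G$ is isomorphic to one of: the complete bipartite graph $K_{s,t}$ with $s, t \ge 1$; the join $K_s + \overline{K_t}$ with $s \ge 1$ and $t \ge 2$; or the join $K_s + (K_1 \cup K_t)$ with $s, t \ge 1$. -/

import Mathlib

open SimpleGraph

/-- The distance-`k` truncated distance `dₖ(x,y) = min{d(x,y), k+1}`, valued in `ℕ∞`
(so unreachable pairs have distance `⊤`, which is truncated to `k+1`). -/
noncomputable def distK {V : Type*} (G : SimpleGraph V) (k : ℕ) (x y : V) : ℕ∞ :=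
  min (G.edist x y) (k + 1)

/-- `S` is a distance-`k` resolving set of `G`. -/
def IsDistKResolving {V : Type*} (G : SimpleGraph V) (k : ℕ) (S : Set V) : Prop :=
  ∀ x y : V, x ≠ y → ∃ z ∈ S, distK G k x z ≠ distK G k y z

/-- The distance-`k` dimension of a finite graph `G`: the minimum cardinality of a
distance-`k` resolving set of `G`. -/
noncomputable def dimK {V : Type*} [Fintype V] (G : SimpleGraph V) (k : ℕ) : ℕ :=
  sInf { m | ∃ S : Finset V, IsDistKResolving G k ↑S ∧ S.card = m }

/-- The join of two graphs: their disjoint union together with all edges between them. -/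
def graphJoin {α β : Type*} (G : SimpleGraph α) (H : SimpleGraph β) :
    SimpleGraph (α ⊕ β) where
  Adj x y := match x, y with
    | Sum.inl a, Sum.inl b => G.Adj a b
    | Sum.inr a, Sum.inr b => H.Adj a b
    | Sum.inl _, Sum.inr _ => True
    | Sum.inr _, Sum.inl _ => True
  symm := ⟨by
    rintro (a | a) (b | b) h
    · exact G.adj_symm h
    · trivial
    · trivial
    · exact H.adj_symm h⟩
  loopless := ⟨by
    rintro (a | a) h
    · exact G.irrefl h
    · exact H.irrefl h⟩

/-!
A set `S` is a distance-`k` resolving set as soon as it separates the pairs of vertices outside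
it, so `dimₖ(G) = n - 2` says exactly that some pair `x, y` is separated by a third vertex while
in every triple some pair is separated by no vertex outside the triple. The latter forces
diameter at most two (the vertices at distance `1, 2, 3` from a vertex on a geodesic would be
separated pairwise by it), and then `dₖ` only records adjacency: the conditions become
statements about twins, vertices with the same neighbours apart from each other.

If there are only two twin classes, both are cliques or independent sets and are completely
joined, which gives `K_{s,t}` or `K_s + K̄_t`. If there are three pairwise non-twins, the
triple condition yields `a, b, c` such that `c` is the only vertex separating `a` from `b`;
chasing the triple condition around this configuration shows that `G - c` is complete,
i.e. `G = K_s + (K₁ ∪ K_t)` with `K₁ = {c}`. Conversely these three graphs are checked directly.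
-/

namespace SimpleGraph

variable {V : Type*} {G : SimpleGraph V} {s t : Set V} {x y z : V}

def AgreeOff (G : SimpleGraph V) (s : Set V) (x y : V) : Prop :=
  ∀ z ∉ s, (G.Adj x z ↔ G.Adj y z)

def IsTwin (G : SimpleGraph V) (x y : V) : Prop :=
  G.AgreeOff {x, y} x y

def DistKAgreeOff (G : SimpleGraph V) (k : ℕ) (s : Set V) (x y : V) : Prop :=
  ∀ z ∉ s, distK G k x z = distK G k y z

lemma AgreeOff.symm (h : G.AgreeOff s x y) : G.AgreeOff s y x :=
  fun z hz => (h z hz).symm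

lemma AgreeOff.mono (h : G.AgreeOff s x y) (hst : s ⊆ t) : G.AgreeOff t x y :=
  fun z hz => h z (fun hs => hz (hst hs))

lemma AgreeOff.trans (hxy : G.AgreeOff s x y) (hyz : G.AgreeOff s y z) : G.AgreeOff s x z :=
  fun w hw => (hxy w hw).trans (hyz w hw)

lemma isTwin_iff : G.IsTwin x y ↔ ∀ z, z ≠ x → z ≠ y → (G.Adj x z ↔ G.Adj y z) := by
  simp [IsTwin, AgreeOff]

lemma isTwin_refl (x : V) : G.IsTwin x x :=
  fun _ _ => Iff.rfl

lemma IsTwin.symm (h : G.IsTwin x y) : G.IsTwin y x := by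
  rw [IsTwin, Set.pair_comm]
  exact AgreeOff.symm h

lemma ne_of_not_isTwin (h : ¬ G.IsTwin x y) : x ≠ y := by
  rintro rfl
  exact h (isTwin_refl x)

lemma IsTwin.agreeOff (h : G.IsTwin x y) (hx : x ∈ s) (hy : y ∈ s) : G.AgreeOff s x y :=
  AgreeOff.mono h (Set.insert_subset hx (Set.singleton_subset_iff.mpr hy))

lemma not_isTwin_of_adj_of_ne_of_not_adj (hzx : z ≠ x) (hzy : z ≠ y) (hx : G.Adj x z)
    (hy : ¬ G.Adj y z) : ¬ G.IsTwin x y :=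
  fun h => hy ((isTwin_iff.mp h z hzx hzy).mp hx)

lemma IsTwin.trans (hxy : G.IsTwin x y) (hyz : G.IsTwin y z) : G.IsTwin x z := by
  rw [isTwin_iff] at *
  rcases eq_or_ne x y with rfl | hxy'
  · exact hyz
  rcases eq_or_ne y z with rfl | hyz'
  · exact hxy
  rcases eq_or_ne x z with rfl | hxz
  · exact fun _ _ _ => Iff.rfl
  intro w hwx hwz
  rcases eq_or_ne w y with rfl | hwy
  · calc G.Adj x w ↔ G.Adj w x := G.adj_comm _ _
      _ ↔ G.Adj z x := hyz x hxy' hxz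
      _ ↔ G.Adj x z := G.adj_comm _ _
      _ ↔ G.Adj w z := hxy z hxz.symm hyz'.symm
      _ ↔ G.Adj z w := G.adj_comm _ _
  · exact (hxy w hwx hwy).trans (hyz w hwy hwz)

end SimpleGraph

def EveryTripleHasAgreeingPair {V : Type*} (R : Set V → V → V → Prop) : Prop :=
  ∀ T : Finset V, T.card = 3 → ∃ x ∈ T, ∃ y ∈ T, x ≠ y ∧ R T x y

section everyTriple

variable {V : Type*} {G : SimpleGraph V} {a b c : V}

lemma everyTripleHasAgreeingPair_congr {R R' : Set V → V → V → Prop}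
    (h : ∀ s x y, x ∈ s → y ∈ s → (R s x y ↔ R' s x y)) :
    EveryTripleHasAgreeingPair R ↔ EveryTripleHasAgreeingPair R' :=
  forall₂_congr fun _ _ => exists_congr fun x => and_congr_right fun hx =>
    exists_congr fun y => and_congr_right fun hy => and_congr_right fun _ => h _ x y hx hy

lemma EveryTripleHasAgreeingPair.agreeOff (h : EveryTripleHasAgreeingPair G.AgreeOff)
    (hab : a ≠ b) (hac : a ≠ c) (hbc : b ≠ c) :
    G.AgreeOff {a, b, c} a b ∨ G.AgreeOff {a, c, b} a c ∨ G.AgreeOff {b, c, a} b c := by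
  classical
  have hacb : ({a, c, b} : Set V) = {a, b, c} := by rw [Set.pair_comm]
  have hbca : ({b, c, a} : Set V) = {a, b, c} := by
    ext
    simp only [Set.mem_insert_iff, Set.mem_singleton_iff]
    tauto
  rw [hacb, hbca]
  obtain ⟨x, hx, y, hy, hxy, hagree⟩ :=
    h {a, b, c} (Finset.card_eq_three.mpr ⟨a, b, c, hab, hac, hbc, rfl⟩)
  simp only [Finset.coe_insert, Finset.coe_singleton] at hagree
  simp only [Finset.mem_insert, Finset.mem_singleton] at hx hy
  rcases hx with rfl | rfl | rfl <;> rcases hy with rfl | rfl | rfl <;>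
    first
    | exact absurd rfl hxy
    | exact .inl hagree
    | exact .inl hagree.symm
    | exact .inr (.inl hagree)
    | exact .inr (.inl hagree.symm)
    | exact .inr (.inr hagree)
    | exact .inr (.inr hagree.symm)

end everyTriple

/-! ### Resolving sets of size `n - 2` and `n - 3` -/

section distK

variable {V : Type*} {G : SimpleGraph V} {k : ℕ} {x y : V}

lemma distK_self (x : V) : distK G k x x = 0 := by
  simp [distK]

lemma distK_ne_zero (h : x ≠ y) : distK G k x y ≠ 0 := by
  simp [distK, h]

lemma distK_eq_edist (h : G.edist x y ≤ k + 1) : distK G k x y = G.edist x y :=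
  min_eq_left h

lemma DistKAgreeOff.symm {s : Set V} (h : G.DistKAgreeOff k s x y) : G.DistKAgreeOff k s y x :=
  fun z hz => (h z hz).symm

end distK

section resolving

variable {V : Type*} {G : SimpleGraph V} {k : ℕ}

lemma IsDistKResolving.mono {S T : Set V} (h : IsDistKResolving G k S) (hST : S ⊆ T) :
    IsDistKResolving G k T := fun x y hxy =>
  let ⟨z, hz, hne⟩ := h x y hxy
  ⟨z, hST hz, hne⟩

lemma isDistKResolving_compl_iff [Fintype V] [DecidableEq V] (T : Finset V) :
    IsDistKResolving G k ↑Tᶜ ↔ ∀ x ∈ T, ∀ y ∈ T, x ≠ y → ¬ G.DistKAgreeOff k T x y := by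
  constructor
  · intro h x _ y _ hxy hagree
    obtain ⟨z, hz, hne⟩ := h x y hxy
    exact hne (hagree z (by simpa using hz))
  · intro h x y hxy
    by_cases hx : x ∈ T
    · by_cases hy : y ∈ T
      · simp only [DistKAgreeOff, not_forall] at h
        obtain ⟨z, hz, hne⟩ := h x hx y hy hxy
        exact ⟨z, by simpa using hz, hne⟩
      · exact ⟨y, by simpa using hy, by rw [distK_self]; exact distK_ne_zero hxy⟩
    · exact ⟨x, by simpa using hx, by rw [distK_self]; exact (distK_ne_zero hxy.symm).symm⟩

lemma isDistKResolving_univ : IsDistKResolving G k Set.univ :=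
  fun x y hxy => ⟨x, trivial, by rw [distK_self]; exact (distK_ne_zero hxy.symm).symm⟩

lemma dimK_le_iff [Fintype V] [DecidableEq V] {m : ℕ} (hm : m ≤ Fintype.card V) :
    dimK G k ≤ m ↔ ∃ T : Finset V, T.card = Fintype.card V - m ∧
      ∀ x ∈ T, ∀ y ∈ T, x ≠ y → ¬ G.DistKAgreeOff k T x y := by
  have hne : { m | ∃ S : Finset V, IsDistKResolving G k ↑S ∧ S.card = m }.Nonempty :=
    ⟨_, Finset.univ, by simpa using isDistKResolving_univ, rfl⟩
  constructor
  · intro h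
    obtain ⟨S, hS, hcard⟩ := Nat.sInf_mem hne
    obtain ⟨S', hSS', hcard'⟩ := Finset.exists_superset_card_eq (hcard.trans_le h) hm
    refine ⟨S'ᶜ, by rw [Finset.card_compl, hcard'], ?_⟩
    rw [← isDistKResolving_compl_iff, compl_compl]
    exact hS.mono (by simpa using hSS')
  · rintro ⟨T, hcard, hT⟩
    refine Nat.sInf_le ⟨Tᶜ, (isDistKResolving_compl_iff T).mpr hT, ?_⟩
    rw [Finset.card_compl, hcard]
    omega

theorem dimK_eq_card_sub_two_iff [Fintype V] (h3 : 3 ≤ Fintype.card V) :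
    dimK G k = Fintype.card V - 2 ↔
      (∃ x y, x ≠ y ∧ ¬ G.DistKAgreeOff k {x, y} x y) ∧
        EveryTripleHasAgreeingPair (G.DistKAgreeOff k) := by
  classical
  have two : dimK G k ≤ Fintype.card V - 2 ↔ ∃ x y, x ≠ y ∧ ¬ G.DistKAgreeOff k {x, y} x y := by
    rw [dimK_le_iff (by omega), show Fintype.card V - (Fintype.card V - 2) = 2 by omega]
    constructor
    · rintro ⟨T, hT, hsep⟩
      obtain ⟨x, y, hxy, rfl⟩ := Finset.card_eq_two.mp hT
      exact ⟨x, y, hxy, by simpa using hsep x (by simp) y (by simp) hxy⟩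
    · rintro ⟨x, y, hxy, hsep⟩
      refine ⟨{x, y}, Finset.card_pair hxy, ?_⟩
      simp only [Finset.coe_insert, Finset.coe_singleton, Finset.mem_insert,
        Finset.mem_singleton]
      rintro a (rfl | rfl) b (rfl | rfl) hab
      · exact absurd rfl hab
      · exact hsep
      · exact fun h => hsep (DistKAgreeOff.symm h)
      · exact absurd rfl hab
  have three :
      dimK G k ≤ Fintype.card V - 3 ↔ ¬ EveryTripleHasAgreeingPair (G.DistKAgreeOff k) := by
    rw [dimK_le_iff (by omega), show Fintype.card V - (Fintype.card V - 3) = 3 by omega,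
      EveryTripleHasAgreeingPair]
    simp only [not_forall, not_exists, exists_prop, not_and]
  rw [show dimK G k = Fintype.card V - 2 ↔
      dimK G k ≤ Fintype.card V - 2 ∧ ¬ dimK G k ≤ Fintype.card V - 3 by omega, two, three, not_not]

end resolving

/-! ### Diameter two -/

section diameter

variable {V : Type*} {G : SimpleGraph V} {k : ℕ}

lemma SimpleGraph.Walk.dist_getVert {u v : V} {p : G.Walk u v} (hp : p.length = G.dist u v)
    {i : ℕ} (hi : i ≤ p.length) : G.dist u (p.getVert i) = i := by
  rw [← length_eq_dist_of_subwalk hp (p.isSubwalk_take i), Walk.take_length, min_eq_left hi]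

theorem ediam_le_two_of_everyTripleHasAgreeingPair (hG : G.Connected) (hk : 2 ≤ k)
    (h : EveryTripleHasAgreeingPair (G.DistKAgreeOff k)) : G.ediam ≤ 2 := by
  classical
  rw [ediam_le_iff]
  by_contra! hfar
  obtain ⟨a, b, hab⟩ := hfar
  obtain ⟨p, hp⟩ := hG.exists_walk_length_eq_dist a b
  have hlen : 3 ≤ p.length := by
    rw [← (hG a b).coe_dist_eq_edist] at hab
    rw [hp]
    exact_mod_cast Order.add_one_le_of_lt hab
  have hdist : ∀ i ∈ Finset.Icc 1 3, distK G k (p.getVert i) a = i := by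
    intro i hi
    have hi3 : i ≤ 3 := (Finset.mem_Icc.mp hi).2
    have he : G.edist (p.getVert i) a = i := by
      rw [edist_comm, ← (hG _ _).coe_dist_eq_edist, Walk.dist_getVert hp (hi3.trans hlen)]
    rw [distK_eq_edist (by rw [he]; exact_mod_cast (by omega : i ≤ k + 1)), he]
  have hinj : Set.InjOn p.getVert (Finset.Icc 1 3) := fun i hi j hj hij => by
    have := hdist j hj
    rw [← hij, hdist i hi, Nat.cast_inj] at this
    exact this
  obtain ⟨x, hx, y, hy, hxy, hagree⟩ :=
    h ((Finset.Icc 1 3).image p.getVert) (by rw [Finset.card_image_of_injOn hinj]; rfl)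
  obtain ⟨i, hi, rfl⟩ := Finset.mem_image.mp hx
  obtain ⟨j, hj, rfl⟩ := Finset.mem_image.mp hy
  have ha : a ∉ ((Finset.Icc 1 3).image p.getVert : Set V) := by
    intro hmem
    obtain ⟨l, hl, hla⟩ := Finset.mem_image.mp (Finset.mem_coe.mp hmem)
    have := hdist l hl
    rw [hla, distK_self] at this
    have : l = 0 := by exact_mod_cast this.symm
    simp [this] at hl
  have := hagree a ha
  rw [hdist i hi, hdist j hj, Nat.cast_inj] at this
  exact hxy (congrArg p.getVert this)

end diameter

section adjacency

variable {V : Type*} {G : SimpleGraph V} {k : ℕ} {s : Set V} {x y z : V}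

lemma edist_eq_two_of_not_adj (hd : G.ediam ≤ 2) (h : x ≠ y) (hadj : ¬ G.Adj x y) :
    G.edist x y = 2 := by
  have hle : G.edist x y ≤ 2 := edist_le_ediam.trans hd
  have h0 : G.edist x y ≠ 0 := by simpa using h
  have h1 : G.edist x y ≠ 1 := by simpa using hadj
  lift G.edist x y to ℕ using (hle.trans_lt (by decide)).ne with m
  norm_cast at hle h0 h1 ⊢
  omega

lemma distK_eq_distK_iff (hd : G.ediam ≤ 2) (hk : 2 ≤ k) (hx : z ≠ x) (hy : z ≠ y) :
    distK G k x z = distK G k y z ↔ (G.Adj x z ↔ G.Adj y z) := by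
  classical
  have hdistK : ∀ w, w ≠ z → distK G k w z = if G.Adj w z then 1 else 2 := by
    intro w hw
    rw [distK_eq_edist ((edist_le_ediam.trans hd).trans (by exact_mod_cast (by omega : 2 ≤ k + 1)))]
    split_ifs with hadj
    · exact edist_eq_one_iff_adj.mpr hadj
    · exact edist_eq_two_of_not_adj hd hw hadj
  rw [hdistK x hx.symm, hdistK y hy.symm]
  split_ifs <;> simp_all

lemma distKAgreeOff_iff_agreeOff (hd : G.ediam ≤ 2) (hk : 2 ≤ k) (hx : x ∈ s) (hy : y ∈ s) :
    G.DistKAgreeOff k s x y ↔ G.AgreeOff s x y :=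
  forall₂_congr fun _ hz =>
    distK_eq_distK_iff hd hk (ne_of_mem_of_not_mem hx hz).symm (ne_of_mem_of_not_mem hy hz).symm

end adjacency

namespace SimpleGraph

/-- For `k ≥ 2`, the adjacency form of `dimK G k = |V| - 2`
(`dimK_eq_card_sub_two_iff_isTwinExtremal`). -/
structure IsTwinExtremal {V : Type*} (G : SimpleGraph V) : Prop where
  ediam_le_two : G.ediam ≤ 2
  exists_not_isTwin : ∃ x y, ¬ G.IsTwin x y
  everyTriple : EveryTripleHasAgreeingPair G.AgreeOff

end SimpleGraph

theorem dimK_eq_card_sub_two_iff_isTwinExtremal {V : Type*} [Fintype V] {G : SimpleGraph V}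
    {k : ℕ} (hG : G.Connected) (h3 : 3 ≤ Fintype.card V) (hk : 2 ≤ k) :
    dimK G k = Fintype.card V - 2 ↔ G.IsTwinExtremal := by
  rw [dimK_eq_card_sub_two_iff h3]
  constructor
  · rintro ⟨⟨x, y, hxy, hsep⟩, htriple⟩
    have hd := ediam_le_two_of_everyTripleHasAgreeingPair hG hk htriple
    have hcongr := everyTripleHasAgreeingPair_congr fun s x y hx hy =>
      distKAgreeOff_iff_agreeOff (G := G) hd hk (s := s) (x := x) (y := y) hx hy
    refine ⟨hd, ⟨x, y, ?_⟩, hcongr.mp htriple⟩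
    rwa [IsTwin, ← distKAgreeOff_iff_agreeOff hd hk (by simp) (by simp)]
  · rintro ⟨hd, ⟨x, y, hxy⟩, htriple⟩
    have hcongr := everyTripleHasAgreeingPair_congr fun s x y hx hy =>
      distKAgreeOff_iff_agreeOff (G := G) hd hk (s := s) (x := x) (y := y) hx hy
    refine ⟨⟨x, y, ne_of_not_isTwin hxy, ?_⟩, hcongr.mpr htriple⟩
    rwa [distKAgreeOff_iff_agreeOff hd hk (by simp) (by simp)]

/-! ### Joins and the three extremal graphs -/

section graphJoin

variable {α β α' β' : Type*} {H₁ : SimpleGraph α} {H₂ : SimpleGraph β}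

@[simp] lemma graphJoin_adj_inl_inl {a b : α} :
    (graphJoin H₁ H₂).Adj (.inl a) (.inl b) ↔ H₁.Adj a b := Iff.rfl

@[simp] lemma graphJoin_adj_inr_inr {a b : β} :
    (graphJoin H₁ H₂).Adj (.inr a) (.inr b) ↔ H₂.Adj a b := Iff.rfl

@[simp] lemma graphJoin_adj_inl_inr {a : α} {b : β} : (graphJoin H₁ H₂).Adj (.inl a) (.inr b) :=
  trivial

@[simp] lemma graphJoin_adj_inr_inl {a : β} {b : α} : (graphJoin H₁ H₂).Adj (.inr a) (.inl b) :=
  trivial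

lemma graphJoin_bot_bot :
    graphJoin (⊥ : SimpleGraph α) (⊥ : SimpleGraph β) = completeBipartiteGraph α β := by
  ext (a | a) (b | b) <;> simp

def graphJoinCongr {H₁' : SimpleGraph α'} {H₂' : SimpleGraph β'} (e₁ : H₁ ≃g H₁')
    (e₂ : H₂ ≃g H₂') : graphJoin H₁ H₂ ≃g graphJoin H₁' H₂' where
  toEquiv := Equiv.sumCongr e₁.toEquiv e₂.toEquiv
  map_rel_iff' := by rintro (a | a) (b | b) <;> simp [e₁.map_adj_iff, e₂.map_adj_iff]

lemma edist_le_two_of_adj_of_adj {V : Type*} {G : SimpleGraph V} {u v w : V} (huw : G.Adj u w)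
    (hwv : G.Adj w v) : G.edist u v ≤ 2 :=
  edist_le (.cons huw (.cons hwv .nil))

lemma ediam_graphJoin_le_two [Nonempty α] [Nonempty β] : (graphJoin H₁ H₂).ediam ≤ 2 := by
  inhabit α
  inhabit β
  refine ediam_le_iff.mpr ?_
  rintro (a | a) (b | b)
  · exact edist_le_two_of_adj_of_adj (w := .inr default) (by simp) (by simp)
  · exact (edist_eq_one_iff_adj.mpr (by simp)).trans_le (by decide)
  · exact (edist_eq_one_iff_adj.mpr (by simp)).trans_le (by decide)
  · exact edist_le_two_of_adj_of_adj (w := .inl default) (by simp) (by simp)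

end graphJoin

section decomposition

variable {V W : Type*} {G : SimpleGraph V}

def isoGraphJoinInduce (G : SimpleGraph V) (A : Set V) [DecidablePred (· ∈ A)]
    (h : ∀ x ∈ A, ∀ y ∉ A, G.Adj x y) : G ≃g graphJoin (G.induce A) (G.induce Aᶜ) :=
  RelIso.symm
    { toEquiv := Equiv.Set.sumCompl A
      map_rel_iff' := by
        rintro (⟨a, ha⟩ | ⟨a, ha⟩) (⟨b, hb⟩ | ⟨b, hb⟩)
        · simp
        · simpa using h a ha b hb
        · simpa using (h b hb a ha).symm
        · simp }

def isoSumInduce (G : SimpleGraph V) (A : Set V) [DecidablePred (· ∈ A)]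
    (h : ∀ x ∈ A, ∀ y ∉ A, ¬ G.Adj x y) : G ≃g G.induce A ⊕g G.induce Aᶜ :=
  RelIso.symm
    { toEquiv := Equiv.Set.sumCompl A
      map_rel_iff' := by
        rintro (⟨a, ha⟩ | ⟨a, ha⟩) (⟨b, hb⟩ | ⟨b, hb⟩)
        · simp
        · simpa using h a ha b hb
        · simpa using fun hab => h b hb a ha hab.symm
        · simp }

lemma nonempty_induce_iso_top {s : Set V} [Finite s] (h : G.IsClique s) {n : ℕ}
    (hn : Nat.card s = n) : Nonempty (G.induce s ≃g (⊤ : SimpleGraph (Fin n))) := by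
  subst hn
  rw [induce_eq_top.mpr h]
  exact ⟨Iso.completeGraph (Finite.equivFin s)⟩

lemma nonempty_induce_iso_bot {s : Set V} [Finite s] (h : G.IsIndepSet s) {n : ℕ}
    (hn : Nat.card s = n) : Nonempty (G.induce s ≃g (⊥ : SimpleGraph (Fin n))) := by
  subst hn
  refine ⟨{ toEquiv := Finite.equivFin s, map_rel_iff' := ?_ }⟩
  rintro ⟨a, ha⟩ ⟨b, hb⟩
  simp only [bot_adj, comap_adj, Function.Embedding.subtype_apply, false_iff]
  exact fun hab => h ha hb hab.ne hab

lemma nonempty_iso_top_sum_top [Finite W] {H : SimpleGraph W} {u : W} (h : H.IsClique {u}ᶜ)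
    (hu : ∀ w, ¬ H.Adj u w) : Nonempty (H ≃g
      (⊤ : SimpleGraph (Fin 1)) ⊕g (⊤ : SimpleGraph (Fin (Nat.card ↥({u}ᶜ : Set W))))) := by
  classical
  obtain ⟨e₁⟩ := nonempty_induce_iso_top (H.isClique_singleton u) Nat.card_unique
  obtain ⟨e₂⟩ := nonempty_induce_iso_top h rfl
  exact ⟨(isoSumInduce H {u} fun x hx y _ => (Set.mem_singleton_iff.mp hx) ▸ hu y).trans
    (Iso.sumCongr e₁ e₂)⟩

end decomposition

section models

variable {V : Type*} [Finite V] {G : SimpleGraph V}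

theorem exists_iso_completeBipartiteGraph {A : Set V} (hA : A.Nonempty) (hAc : Aᶜ.Nonempty)
    (h₁ : G.IsIndepSet A) (h₂ : G.IsIndepSet Aᶜ) (hcross : ∀ x ∈ A, ∀ y ∉ A, G.Adj x y) :
    ∃ s t, 1 ≤ s ∧ 1 ≤ t ∧ Nonempty (G ≃g completeBipartiteGraph (Fin s) (Fin t)) := by
  classical
  have := hA.to_subtype
  have := hAc.to_subtype
  obtain ⟨e₁⟩ := nonempty_induce_iso_bot h₁ rfl
  obtain ⟨e₂⟩ := nonempty_induce_iso_bot h₂ rfl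
  refine ⟨Nat.card A, Nat.card ↥Aᶜ, Nat.card_pos, Nat.card_pos, ⟨?_⟩⟩
  rw [← graphJoin_bot_bot]
  exact (isoGraphJoinInduce G A hcross).trans (graphJoinCongr e₁ e₂)

theorem exists_iso_graphJoin_top_bot {A : Set V} (hA : A.Nonempty) (hAc : Aᶜ.Nontrivial)
    (h₁ : G.IsClique A) (h₂ : G.IsIndepSet Aᶜ) (hcross : ∀ x ∈ A, ∀ y ∉ A, G.Adj x y) :
    ∃ s t, 1 ≤ s ∧ 2 ≤ t ∧
      Nonempty (G ≃g graphJoin (⊤ : SimpleGraph (Fin s)) (⊥ : SimpleGraph (Fin t))) := by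
  classical
  have := hA.to_subtype
  have := hAc.coe_sort
  obtain ⟨e₁⟩ := nonempty_induce_iso_top h₁ rfl
  obtain ⟨e₂⟩ := nonempty_induce_iso_bot h₂ rfl
  exact ⟨_, _, Nat.card_pos, Finite.one_lt_card,
    ⟨(isoGraphJoinInduce G A hcross).trans (graphJoinCongr e₁ e₂)⟩⟩

theorem exists_iso_graphJoin_top_sum {u a b : V} (hclique : G.IsClique {u}ᶜ) (ha : G.Adj u a)
    (hbu : b ≠ u) (hb : ¬ G.Adj u b) :
    ∃ s t, 1 ≤ s ∧ 1 ≤ t ∧ Nonempty (G ≃g graphJoin (⊤ : SimpleGraph (Fin s))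
      ((⊤ : SimpleGraph (Fin 1)) ⊕g (⊤ : SimpleGraph (Fin t)))) := by
  classical
  set A := G.neighborSet u
  have hA : ∀ x ∈ A, x ≠ u := fun x hx => (G.ne_of_adj hx).symm
  have hcross : ∀ x ∈ A, ∀ y ∉ A, G.Adj x y := by
    intro x hx y hy
    by_cases hyu : y = u
    · exact hyu ▸ (G.mem_neighborSet u x).mp hx |>.symm
    · exact hclique (hA x hx) hyu (ne_of_mem_of_not_mem hx hy)
  have huA : u ∉ A := G.notMem_neighborSet_self
  have := Set.nonempty_of_mem ((G.mem_neighborSet u a).mpr ha) |>.to_subtype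
  have : Nonempty ↥({⟨u, huA⟩}ᶜ : Set ↥Aᶜ) := ⟨⟨⟨b, hb⟩, fun h => hbu (congrArg Subtype.val h)⟩⟩
  obtain ⟨e₁⟩ := nonempty_induce_iso_top (hclique.subset hA) rfl
  obtain ⟨e₂⟩ := nonempty_iso_top_sum_top (H := G.induce Aᶜ) (u := ⟨u, huA⟩)
    (fun x hx y hy hxy => hclique (fun h => hx (Subtype.ext h)) (fun h => hy (Subtype.ext h))
      (fun h => hxy (Subtype.ext h)))
    (fun w hw => w.2 hw)
  exact ⟨_, _, Nat.card_pos, Nat.card_pos,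
    ⟨(isoGraphJoinInduce G A hcross).trans (graphJoinCongr e₁ e₂)⟩⟩

end models

namespace SimpleGraph

section invariance

variable {V W : Type*} {G : SimpleGraph V} {H : SimpleGraph W} {s : Set V} {x y : V}

lemma Hom.edist_map_le (f : G →g H) (u v : V) : H.edist (f u) (f v) ≤ G.edist u v := by
  by_cases h : G.edist u v = ⊤
  · simp [h]
  · obtain ⟨p, hp⟩ := exists_walk_of_edist_ne_top h
    rw [← hp, ← Walk.length_map f p]
    exact edist_le _

lemma Iso.agreeOff_iff (e : G ≃g H) : H.AgreeOff (e '' s) (e x) (e y) ↔ G.AgreeOff s x y := by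
  simp only [AgreeOff, e.surjective.forall, e.injective.mem_set_image, Iso.map_adj_iff]

lemma Iso.isTwin_iff (e : G ≃g H) : H.IsTwin (e x) (e y) ↔ G.IsTwin x y := by
  rw [IsTwin, IsTwin, ← e.agreeOff_iff, Set.image_pair]

lemma IsTwinExtremal.of_iso (e : G ≃g H) (h : H.IsTwinExtremal) : G.IsTwinExtremal where
  ediam_le_two := ediam_le_iff.mpr fun u v => by
    simpa using (e.symm.toHom.edist_map_le (e u) (e v)).trans (edist_le_ediam.trans h.1)
  exists_not_isTwin := by
    obtain ⟨x, y, hxy⟩ := h.2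
    exact ⟨e.symm x, e.symm y, by rwa [← e.isTwin_iff, e.apply_symm_apply, e.apply_symm_apply]⟩
  everyTriple T hT := by
    classical
    obtain ⟨x', hx', y', hy', hxy, hagree⟩ :=
      h.3 (T.map e.toEquiv.toEmbedding) (by rw [Finset.card_map, hT])
    obtain ⟨x, hx, rfl⟩ := Finset.mem_map.mp hx'
    obtain ⟨y, hy, rfl⟩ := Finset.mem_map.mp hy'
    refine ⟨x, hx, y, hy, fun h => hxy (h ▸ rfl), ?_⟩
    rw [← e.agreeOff_iff]
    simpa using hagree

end invariance

end SimpleGraph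

section modelConditions

variable {α β : Type*} {V : Type*} {G : SimpleGraph V}

lemma isTwin_top (a b : α) : (⊤ : SimpleGraph α).IsTwin a b :=
  isTwin_iff.mpr fun z hza hzb => by simp [hza.symm, hzb.symm]

lemma isTwin_bot (a b : α) : (⊥ : SimpleGraph α).IsTwin a b :=
  isTwin_iff.mpr fun _ _ _ => by simp

lemma graphJoin_isTwin_inl {H₁ : SimpleGraph α} {H₂ : SimpleGraph β} {a a' : α}
    (h : H₁.IsTwin a a') : (graphJoin H₁ H₂).IsTwin (.inl a) (.inl a') := by
  refine isTwin_iff.mpr ?_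
  rintro (c | c) hca hca'
  · simpa using isTwin_iff.mp h c (by simpa using hca) (by simpa using hca')
  · simp

lemma graphJoin_isTwin_inr {H₁ : SimpleGraph α} {H₂ : SimpleGraph β} {b b' : β}
    (h : H₂.IsTwin b b') : (graphJoin H₁ H₂).IsTwin (.inr b) (.inr b') := by
  refine isTwin_iff.mpr ?_
  rintro (c | c) hcb hcb'
  · simp
  · simpa using isTwin_iff.mp h c (by simpa using hcb) (by simpa using hcb')

lemma everyTripleHasAgreeingPair_graphJoin {H₁ : SimpleGraph α} {H₂ : SimpleGraph β}
    (h₁ : ∀ a a', H₁.IsTwin a a') (h₂ : ∀ b b', H₂.IsTwin b b') :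
    EveryTripleHasAgreeingPair (graphJoin H₁ H₂).AgreeOff := by
  intro T hT
  obtain ⟨x, hx, y, hy, hxy, hside⟩ := Finset.exists_ne_map_eq_of_card_lt_of_maps_to
    (s := T) (t := Finset.univ) (f := Sum.isLeft) (by simp [hT])
    (fun _ _ => Finset.mem_coe.mpr (Finset.mem_univ _))
  refine ⟨x, hx, y, hy, hxy, IsTwin.agreeOff ?_ hx hy⟩
  rcases x with a | b <;> rcases y with a' | b'
  · exact graphJoin_isTwin_inl (h₁ a a')
  · simp at hside
  · simp at hside
  · exact graphJoin_isTwin_inr (h₂ b b')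

/-- Twins are read off the adjacency to `u`, except in a triple through `u`, where the other
two vertices only differ at `u`. -/
lemma everyTripleHasAgreeingPair_of_isClique_compl_singleton {u : V} (h : G.IsClique {u}ᶜ) :
    EveryTripleHasAgreeingPair G.AgreeOff := by
  classical
  intro T hT
  obtain ⟨x, hx, y, hy, hxy, hxu, hyu, hu⟩ : ∃ x ∈ T, ∃ y ∈ T, x ≠ y ∧ x ≠ u ∧ y ≠ u ∧
      (u ∈ T ∨ (G.Adj u x ↔ G.Adj u y)) := by
    by_cases huT : u ∈ T
    · obtain ⟨x, y, hxy, hT'⟩ := Finset.card_eq_two.mp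
        (by rw [Finset.card_erase_of_mem huT, hT] : (T.erase u).card = 2)
      have hx : x ∈ T.erase u := by simp [hT']
      have hy : y ∈ T.erase u := by simp [hT']
      exact ⟨x, Finset.mem_of_mem_erase hx, y, Finset.mem_of_mem_erase hy, hxy,
        Finset.ne_of_mem_erase hx, Finset.ne_of_mem_erase hy, .inl huT⟩
    · obtain ⟨x, hx, y, hy, hxy, hadj⟩ := Finset.exists_ne_map_eq_of_card_lt_of_maps_to
        (s := T) (t := Finset.univ) (f := fun w => decide (G.Adj u w)) (by simp [hT])
        (fun _ _ => Finset.mem_coe.mpr (Finset.mem_univ _))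
      exact ⟨x, hx, y, hy, hxy, fun h => huT (h ▸ hx), fun h => huT (h ▸ hy),
        .inr (by simpa using hadj)⟩
  refine ⟨x, hx, y, hy, hxy, fun z hz => ?_⟩
  have hzx : z ≠ x := fun h => hz (h ▸ hx)
  have hzy : z ≠ y := fun h => hz (h ▸ hy)
  by_cases hzu : z = u
  · subst hzu
    rw [G.adj_comm x, G.adj_comm y]
    exact hu.resolve_left hz
  · exact iff_of_true (h hxu hzu hzx.symm) (h hyu hzu hzy.symm)

end modelConditions

section modelsAreTwinExtremal

variable {s t : ℕ}

theorem isTwinExtremal_completeBipartiteGraph (hs : 1 ≤ s) (ht : 1 ≤ t) (hst : 3 ≤ s + t) :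
    (completeBipartiteGraph (Fin s) (Fin t)).IsTwinExtremal := by
  have : Nonempty (Fin s) := ⟨⟨0, hs⟩⟩
  have : Nonempty (Fin t) := ⟨⟨0, ht⟩⟩
  rw [← graphJoin_bot_bot]
  refine ⟨ediam_graphJoin_le_two, ?_, everyTripleHasAgreeingPair_graphJoin isTwin_bot isTwin_bot⟩
  rcases Nat.lt_or_ge 1 s with h2 | h1
  · exact ⟨.inr ⟨0, ht⟩, .inl ⟨0, hs⟩, not_isTwin_of_adj_of_ne_of_not_adj (z := .inl ⟨1, h2⟩)
      (by simp) (by simp) (by simp) (by simp)⟩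
  · exact ⟨.inl ⟨0, hs⟩, .inr ⟨0, ht⟩, not_isTwin_of_adj_of_ne_of_not_adj (z := .inr ⟨1, by omega⟩)
      (by simp) (by simp) (by simp) (by simp)⟩

theorem isTwinExtremal_graphJoin_top_bot (hs : 1 ≤ s) (ht : 2 ≤ t) :
    (graphJoin (⊤ : SimpleGraph (Fin s)) (⊥ : SimpleGraph (Fin t))).IsTwinExtremal := by
  have : Nonempty (Fin s) := ⟨⟨0, hs⟩⟩
  have : Nonempty (Fin t) := ⟨⟨0, by omega⟩⟩
  refine ⟨ediam_graphJoin_le_two, ⟨.inl ⟨0, hs⟩, .inr ⟨0, by omega⟩, ?_⟩,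
    everyTripleHasAgreeingPair_graphJoin isTwin_top isTwin_bot⟩
  exact not_isTwin_of_adj_of_ne_of_not_adj (z := .inr ⟨1, ht⟩) (by simp) (by simp) (by simp) (by simp)

theorem isTwinExtremal_graphJoin_top_sum (hs : 1 ≤ s) (ht : 1 ≤ t) :
    (graphJoin (⊤ : SimpleGraph (Fin s))
      ((⊤ : SimpleGraph (Fin 1)) ⊕g (⊤ : SimpleGraph (Fin t)))).IsTwinExtremal := by
  have : Nonempty (Fin s) := ⟨⟨0, hs⟩⟩
  refine ⟨ediam_graphJoin_le_two, ⟨.inl ⟨0, hs⟩, .inr (.inr ⟨0, ht⟩), ?_⟩,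
    everyTripleHasAgreeingPair_of_isClique_compl_singleton (u := .inr (.inl 0)) ?_⟩
  · exact not_isTwin_of_adj_of_ne_of_not_adj (z := .inr (.inl 0)) (by simp) (by simp) (by simp)
      (by simp)
  · rintro (a | i | c) hx (b | j | d) hy hxy <;> simp_all [Fin.fin_one_eq_zero]

end modelsAreTwinExtremal

/-! ### Classification -/

namespace SimpleGraph

section twinClasses

variable {V : Type*} {G : SimpleGraph V} {x y : V}

lemma reachable_of_ediam_le_two (hd : G.ediam ≤ 2) (x y : V) : G.Reachable x y :=
  reachable_of_edist_ne_top (ne_top_of_le_ne_top (by decide) (edist_le_ediam.trans hd))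

lemma exists_adj_adj_of_ediam_le_two (hd : G.ediam ≤ 2) (hne : x ≠ y) (hxy : ¬ G.Adj x y) :
    ∃ w, G.Adj x w ∧ G.Adj w y := by
  obtain ⟨w, hw⟩ := (edist_eq_two_iff.mp (edist_eq_two_of_not_adj hd hne hxy)).2.2
  exact ⟨w, hw.1, hw.2.symm⟩

lemma isClique_or_isIndepSet_of_isTwin {s : Set V} (h : ∀ x ∈ s, ∀ y ∈ s, G.IsTwin x y) :
    G.IsClique s ∨ G.IsIndepSet s := by
  by_cases hedge : ∃ x ∈ s, ∃ y ∈ s, G.Adj x y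
  · left
    obtain ⟨x, hx, y, hy, hxy⟩ := hedge
    have spread : ∀ p ∈ s, ∀ q ∈ s, G.Adj p q → ∀ r ∈ s, r ≠ p → G.Adj p r := by
      intro p hp q hq hpq r hr hrp
      rcases eq_or_ne r q with rfl | hrq
      · exact hpq
      · exact ((isTwin_iff.mp (h q hq r hr) p hpq.ne hrp.symm).mp hpq.symm).symm
    intro p hp q hq hpq
    rcases eq_or_ne p x with rfl | hpx
    · exact spread p hp y hy hxy q hq hpq.symm
    · exact spread p hp x hx (spread x hx y hy hxy p hp hpx).symm q hq hpq.symm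
  · right
    exact fun p hp q hq _ hpq => hedge ⟨p, hp, q, hq, hpq⟩

/-- Twins on either side of a cut see the cut alike, so one edge across it forces all. -/
lemma forall_adj_of_isTwin {A : Set V} {a b : V} (hab : G.Reachable a b) (ha : a ∈ A)
    (hb : b ∉ A) (h₁ : ∀ x ∈ A, ∀ y ∈ A, G.IsTwin x y) (h₂ : ∀ x ∉ A, ∀ y ∉ A, G.IsTwin x y) :
    ∀ x ∈ A, ∀ y ∉ A, G.Adj x y := by
  obtain ⟨p⟩ := hab
  obtain ⟨d, -, hd₁, hd₂⟩ := p.exists_boundary_dart A ha hb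
  intro x hx y hy
  have hy' : G.Adj d.fst y := ((isTwin_iff.mp (h₂ y hy d.snd hd₂) d.fst
    (ne_of_mem_of_not_mem hd₁ hy) (ne_of_mem_of_not_mem hd₁ hd₂)).mpr d.adj.symm).symm
  exact (isTwin_iff.mp (h₁ x hx d.fst hd₁) y (ne_of_mem_of_not_mem hx hy).symm
    (ne_of_mem_of_not_mem hd₁ hy).symm).mpr hy'

theorem exists_iso_of_isTwin_or_isTwin [Finite V] (hd : G.ediam ≤ 2) {a b : V}
    (hab : ¬ G.IsTwin a b) (hsplit : ∀ v, G.IsTwin v a ∨ G.IsTwin v b) :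
    (∃ s t, 1 ≤ s ∧ 1 ≤ t ∧ Nonempty (G ≃g completeBipartiteGraph (Fin s) (Fin t))) ∨
      ∃ s t, 1 ≤ s ∧ 2 ≤ t ∧
        Nonempty (G ≃g graphJoin (⊤ : SimpleGraph (Fin s)) (⊥ : SimpleGraph (Fin t))) := by
  set A := {v | G.IsTwin v a}
  have haA : a ∈ A := isTwin_refl a
  have hbA : b ∉ A := fun h => hab h.symm
  have h₁ : ∀ x ∈ A, ∀ y ∈ A, G.IsTwin x y := fun x hx y hy => hx.trans hy.symm
  have h₂ : ∀ x ∉ A, ∀ y ∉ A, G.IsTwin x y := fun x hx y hy =>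
    ((hsplit x).resolve_left hx).trans ((hsplit y).resolve_left hy).symm
  have hcross := forall_adj_of_isTwin (reachable_of_ediam_le_two hd a b) haA hbA h₁ h₂
  have hnot : ¬ (G.IsClique A ∧ G.IsClique Aᶜ) := by
    rintro ⟨hA, hAc⟩
    refine hab (isTwin_iff.mpr fun z hza hzb => iff_of_true ?_ ?_)
    · by_cases hz : z ∈ A
      exacts [hA haA hz hza.symm, hcross a haA z hz]
    · by_cases hz : z ∈ A
      exacts [(hcross z hz b hbA).symm, hAc hbA hz hzb.symm]
  have hnontrivial : ∀ {s : Set V}, ¬ G.IsClique s → s.Nontrivial := fun hs =>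
    Set.not_subsingleton_iff.mp fun h => hs (h.pairwise G.Adj)
  rcases isClique_or_isIndepSet_of_isTwin h₁ with hA | hA <;>
    rcases isClique_or_isIndepSet_of_isTwin (s := Aᶜ) h₂ with hAc | hAc
  · exact absurd ⟨hA, hAc⟩ hnot
  · exact .inr (exists_iso_graphJoin_top_bot ⟨a, haA⟩ (hnontrivial fun h => hnot ⟨hA, h⟩) hA hAc
      hcross)
  · refine .inr (exists_iso_graphJoin_top_bot ⟨b, hbA⟩ ?_ hAc (by rwa [compl_compl]) ?_)
    · rw [compl_compl]
      exact hnontrivial fun h => hnot ⟨h, hAc⟩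
    · exact fun x hx y hy => (hcross y (not_not.mp hy) x hx).symm
  · exact .inl (exists_iso_completeBipartiteGraph ⟨a, haA⟩ ⟨b, hbA⟩ hA hAc hcross)

end twinClasses

section soleSeparator

variable {V : Type*} {G : SimpleGraph V} {a b c : V}

/-- `c` is the only vertex separating `a` from `b`, and it is adjacent to `a`. -/
structure IsSoleSeparator (G : SimpleGraph V) (a b c : V) : Prop where
  ne_ab : a ≠ b
  ne_ac : a ≠ c
  ne_bc : b ≠ c
  agreeOff : G.AgreeOff {a, b, c} a b
  adj : G.Adj a c
  not_adj : ¬ G.Adj b c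

namespace IsSoleSeparator

lemma adj_iff (h : G.IsSoleSeparator a b c) {z : V} (hza : z ≠ a) (hzb : z ≠ b) (hzc : z ≠ c) :
    G.Adj a z ↔ G.Adj b z :=
  h.agreeOff z (by simp [hza, hzb, hzc])

lemma agreeOff_insert (h : G.IsSoleSeparator a b c) (ht : EveryTripleHasAgreeingPair G.AgreeOff)
    {z : V} (hza : z ≠ a) (hzb : z ≠ b) (hzc : z ≠ c) : G.AgreeOff {a, b, c, z} z a := by
  rcases ht.agreeOff h.ne_ab hza.symm hzb.symm with hab | haz | hbz
  · exact absurd ((hab c (by simp [h.ne_ac.symm, h.ne_bc.symm, hzc.symm])).mp h.adj) h.not_adj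
  · rw [Set.pair_comm z b] at haz
    exact (haz.mono (by simp [Set.insert_subset_iff])).symm
  · have hbz' : G.AgreeOff {a, b, c, z} b z := hbz.mono (by simp [Set.insert_subset_iff])
    have hab' : G.AgreeOff {a, b, c, z} a b := h.agreeOff.mono (by simp [Set.insert_subset_iff])
    exact (hab'.trans hbz').symm

lemma adj_of_ne_of_not_adj (h : G.IsSoleSeparator a b c) (ht : EveryTripleHasAgreeingPair G.AgreeOff)
    (hd : G.ediam ≤ 2) (hab : G.Adj a b) {z : V} (hza : z ≠ a) (hzb : z ≠ b) (hzc : z ≠ c)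
    (hz : ¬ G.Adj z c) : G.Adj a z := by
  by_contra haz
  have hbz : ¬ G.Adj b z := fun hbz => haz ((h.adj_iff hza hzb hzc).mpr hbz)
  have hisolated : ∀ w, ¬ G.Adj z w := by
    intro w hzw
    rcases eq_or_ne w a with rfl | hwa
    · exact haz hzw.symm
    rcases eq_or_ne w b with rfl | hwb
    · exact hbz hzw.symm
    rcases eq_or_ne w c with rfl | hwc
    · exact hz hzw
    exact haz ((h.agreeOff_insert ht hwa hwb hwc z (by simp [hza, hzb, hzc, hzw.ne])).mp
      hzw.symm)
  obtain ⟨p⟩ := reachable_of_ediam_le_two hd z a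
  exact hisolated _ (p.adj_snd (Walk.not_nil_of_ne hza))

lemma adj_of_ne (h : G.IsSoleSeparator a b c) (ht : EveryTripleHasAgreeingPair G.AgreeOff)
    (hd : G.ediam ≤ 2) (hab : G.Adj a b) {z : V} (hza : z ≠ a) (hzb : z ≠ b) (hzc : z ≠ c) :
    G.Adj a z := by
  by_cases hz : G.Adj z c
  swap
  · exact h.adj_of_ne_of_not_adj ht hd hab hza hzb hzc hz
  by_contra haz
  have hbz : ¬ G.Adj b z := fun hbz => haz ((h.adj_iff hza hzb hzc).mpr hbz)
  have hcz : G.AgreeOff {a, c, z} c z := by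
    rcases ht.agreeOff h.ne_ac hza.symm hzc.symm with hac | haz' | hcz
    · exact absurd ((hac b (by simp [h.ne_ab.symm, h.ne_bc, hzb.symm])).mp hab).symm h.not_adj
    · exact absurd ((haz' b (by simp [h.ne_ab.symm, h.ne_bc, hzb.symm])).mp hab).symm hbz
    · rwa [Set.insert_comm, Set.pair_comm]
  have hc : ∀ y, y ≠ a → y ≠ b → y ≠ c → G.Adj y c := by
    intro y hya hyb hyc
    by_contra hyc'
    have hyz : y ≠ z := fun hyz => hyc' (hyz ▸ hz)
    have hzy := (h.agreeOff_insert ht hza hzb hzc y (by simp [hya, hyb, hyc, hyz])).mpr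
      (h.adj_of_ne_of_not_adj ht hd hab hya hyb hyc hyc')
    exact hyc' ((hcz y (by simp [hya, hyc, hyz])).mpr hzy).symm
  obtain ⟨w, hzw, hwb⟩ := exists_adj_adj_of_ediam_le_two hd hzb fun hzb => hbz hzb.symm
  have hwa : w ≠ a := fun hwa => haz (hwa ▸ hzw.symm)
  have hwc : w ≠ c := fun hwc => h.not_adj (hwc ▸ hwb.symm)
  have haw : G.Adj a w := (h.adj_iff hwa hwb.ne hwc).mpr hwb.symm
  -- now no pair of `{b, z, w}` agrees off it
  rcases ht.agreeOff hzb.symm hwb.ne.symm hzw.ne with hbz' | hbw | hzw'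
  · exact haz ((hbz' a (by simp [h.ne_ab, hza.symm, hwa.symm])).mp hab.symm).symm
  · exact h.not_adj ((hbw c (by simp [h.ne_bc.symm, hwc.symm, hzc.symm])).mpr
      (hc w hwa hwb.ne hwc))
  · exact haz ((hzw' a (by simp [hza.symm, hwa.symm, h.ne_ab])).mpr haw.symm).symm

lemma adj_ab (h : G.IsSoleSeparator a b c) (ht : EveryTripleHasAgreeingPair G.AgreeOff)
    (hd : G.ediam ≤ 2) (htwin : ¬ G.IsTwin a c) : G.Adj a b := by
  by_contra hab
  obtain ⟨w, haw, hwb⟩ := exists_adj_adj_of_ediam_le_two hd h.ne_ab hab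
  have hwa : w ≠ a := haw.ne.symm
  have hwc : w ≠ c := fun hwc => h.not_adj (hwc ▸ hwb.symm)
  rcases ht.agreeOff h.ne_ab hwa.symm hwb.ne.symm with hab' | haw' | hbw
  · exact h.not_adj ((hab' c (by simp [h.ne_ac.symm, h.ne_bc.symm, hwc.symm])).mp h.adj)
  · have hwc' : G.Adj w c := (haw' c (by simp [h.ne_ac.symm, hwc.symm, h.ne_bc.symm])).mp h.adj
    rcases ht.agreeOff h.ne_ac hwa.symm hwc.symm with hac | haw'' | hcw
    · refine htwin (isTwin_iff.mpr fun z hza hzc => ?_)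
      rcases eq_or_ne z w with rfl | hzw
      · exact iff_of_true haw hwc'.symm
      · exact hac z (by simp [hza, hzc, hzw])
    · exact hab ((haw'' b (by simp [h.ne_ab.symm, hwb.ne.symm, h.ne_bc])).mpr hwb)
    · exact h.not_adj ((hcw b (by simp [h.ne_bc, hwb.ne.symm, h.ne_ab.symm])).mpr hwb).symm
  · have hwc' : ¬ G.Adj w c := fun hwc' =>
      h.not_adj ((hbw c (by simp [h.ne_bc.symm, hwc.symm, h.ne_ac.symm])).mpr hwc')
    obtain ⟨v, hbv, hvc⟩ := exists_adj_adj_of_ediam_le_two hd h.ne_bc h.not_adj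
    have hva : v ≠ a := fun hva => hab (hva ▸ hbv).symm
    have hvw : v ≠ w := fun hvw => hwc' (hvw ▸ hvc)
    rcases ht.agreeOff h.ne_ac hva.symm hvc.ne.symm with hac | hav | hcv
    · exact hwc' ((hac w (by simp [hwa, hwc, hvw.symm])).mp haw).symm
    · exact hab ((hav b (by simp [h.ne_ab.symm, hbv.ne, h.ne_bc])).mpr hbv.symm)
    · exact h.not_adj ((hcv b (by simp [h.ne_bc, hbv.ne, h.ne_ab.symm])).mpr hbv.symm).symm

lemma isClique_compl (h : G.IsSoleSeparator a b c) (ht : EveryTripleHasAgreeingPair G.AgreeOff)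
    (hd : G.ediam ≤ 2) (htwin : ¬ G.IsTwin a c) : G.IsClique {c}ᶜ := by
  have hab := h.adj_ab ht hd htwin
  have ha : ∀ x, x ≠ a → x ≠ c → G.Adj a x := fun x hxa hxc => by
    rcases eq_or_ne x b with rfl | hxb
    exacts [hab, h.adj_of_ne ht hd hab hxa hxb hxc]
  have hb : ∀ x, x ≠ b → x ≠ c → G.Adj b x := fun x hxb hxc => by
    rcases eq_or_ne x a with rfl | hxa
    exacts [hab.symm, (h.adj_iff hxa hxb hxc).mp (ha x hxa hxc)]
  intro x hxc y hyc hxy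
  simp only [Set.mem_compl_iff, Set.mem_singleton_iff] at hxc hyc
  rcases eq_or_ne x a with rfl | hxa
  · exact ha y hxy.symm hyc
  rcases eq_or_ne x b with rfl | hxb
  · exact hb y hxy.symm hyc
  rcases eq_or_ne y a with rfl | hya
  · exact (ha x hxa hxc).symm
  rcases eq_or_ne y b with rfl | hyb
  · exact (hb x hxb hxc).symm
  exact (h.agreeOff_insert ht hxa hxb hxc y (by simp [hya, hyb, hyc, hxy.symm])).mpr
    (ha y hya hyc)

end IsSoleSeparator

lemma isSoleSeparator_of_agreeOff {x y w : V} (hxy : ¬ G.IsTwin x y) (hxw : x ≠ w) (hyw : y ≠ w)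
    (h : G.AgreeOff {x, y, w} x y) : G.IsSoleSeparator x y w ∨ G.IsSoleSeparator y x w := by
  have hsep : ¬ (G.Adj x w ↔ G.Adj y w) := fun hiff => hxy (isTwin_iff.mpr fun z hzx hzy => by
    rcases eq_or_ne z w with rfl | hzw
    exacts [hiff, h z (by simp [hzx, hzy, hzw])])
  by_cases hx : G.Adj x w
  · exact .inl ⟨ne_of_not_isTwin hxy, hxw, hyw, h, hx, fun hy => hsep (iff_of_true hx hy)⟩
  · refine .inr ⟨(ne_of_not_isTwin hxy).symm, hyw, hxw, ?_, ?_, hx⟩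
    · rw [Set.insert_comm]
      exact h.symm
    · by_contra hy
      exact hsep (iff_of_false hx hy)

theorem exists_isClique_compl_singleton (hd : G.ediam ≤ 2)
    (ht : EveryTripleHasAgreeingPair G.AgreeOff) (hab : ¬ G.IsTwin a b) (hac : ¬ G.IsTwin a c)
    (hbc : ¬ G.IsTwin b c) : ∃ u x y, G.IsClique {u}ᶜ ∧ G.Adj u x ∧ y ≠ u ∧ ¬ G.Adj u y := by
  have key : ∀ x y w, ¬ G.IsTwin x y → ¬ G.IsTwin x w → ¬ G.IsTwin y w →
      G.AgreeOff {x, y, w} x y → ∃ u x y, G.IsClique {u}ᶜ ∧ G.Adj u x ∧ y ≠ u ∧ ¬ G.Adj u y := by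
    intro x y w hxy hxw hyw hagree
    rcases isSoleSeparator_of_agreeOff hxy (ne_of_not_isTwin hxw) (ne_of_not_isTwin hyw) hagree
      with h | h
    · exact ⟨w, x, y, h.isClique_compl ht hd hxw, h.adj.symm, h.ne_bc, fun h' =>
        h.not_adj h'.symm⟩
    · exact ⟨w, y, x, h.isClique_compl ht hd hyw, h.adj.symm, h.ne_bc, fun h' =>
        h.not_adj h'.symm⟩
  rcases ht.agreeOff (ne_of_not_isTwin hab) (ne_of_not_isTwin hac) (ne_of_not_isTwin hbc)
    with h | h | h
  · exact key a b c hab hac hbc h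
  · exact key a c b hac hab (fun h => hbc h.symm) h
  · exact key b c a hbc (fun h => hab h.symm) (fun h => hac h.symm) h

end soleSeparator

theorem IsTwinExtremal.exists_iso {V : Type*} [Finite V] {G : SimpleGraph V}
    (h : G.IsTwinExtremal) :
    (∃ s t, 1 ≤ s ∧ 1 ≤ t ∧ Nonempty (G ≃g completeBipartiteGraph (Fin s) (Fin t))) ∨
      (∃ s t, 1 ≤ s ∧ 2 ≤ t ∧
        Nonempty (G ≃g graphJoin (⊤ : SimpleGraph (Fin s)) (⊥ : SimpleGraph (Fin t)))) ∨
      ∃ s t, 1 ≤ s ∧ 1 ≤ t ∧ Nonempty (G ≃g graphJoin (⊤ : SimpleGraph (Fin s))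
        ((⊤ : SimpleGraph (Fin 1)) ⊕g (⊤ : SimpleGraph (Fin t)))) := by
  obtain ⟨hd, ⟨a, b, hab⟩, ht⟩ := h
  by_cases hthird : ∃ c, ¬ G.IsTwin a c ∧ ¬ G.IsTwin b c
  · obtain ⟨c, hac, hbc⟩ := hthird
    obtain ⟨u, x, y, hu, hx, hyu, hy⟩ := exists_isClique_compl_singleton hd ht hab hac hbc
    exact .inr (.inr (exists_iso_graphJoin_top_sum hu hx hyu hy))
  · have hsplit : ∀ v, G.IsTwin v a ∨ G.IsTwin v b := fun v => by
      by_contra! hv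
      exact hthird ⟨v, fun h => hv.1 h.symm, fun h => hv.2 h.symm⟩
    rcases exists_iso_of_isTwin_or_isTwin hd hab hsplit with h | h
    exacts [.inl h, .inr (.inl h)]

end SimpleGraph

/-- For a connected graph `G` of order `n ≥ 4` and integer `k ≥ 2`: `dimₖ(G) = n-2` iff
`G ≅ K_{s,t}` (`s,t ≥ 1`), `G ≅ K_s + K̄_t` (`s ≥ 1`, `t ≥ 2`), or
`G ≅ K_s + (K₁ ∪ K_t)` (`s,t ≥ 1`). -/
theorem stmt5 {V : Type*} [Fintype V] (G : SimpleGraph V) (n : ℕ)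
    (hn : Fintype.card V = n) (h4 : 4 ≤ n) (hG : G.Connected) (k : ℕ) (hk : 2 ≤ k) :
    dimK G k = n - 2 ↔
      ((∃ s t : ℕ, 1 ≤ s ∧ 1 ≤ t ∧
          Nonempty (G ≃g completeBipartiteGraph (Fin s) (Fin t))) ∨
       (∃ s t : ℕ, 1 ≤ s ∧ 2 ≤ t ∧
          Nonempty (G ≃g graphJoin (⊤ : SimpleGraph (Fin s)) (⊥ : SimpleGraph (Fin t)))) ∨
       (∃ s t : ℕ, 1 ≤ s ∧ 1 ≤ t ∧
          Nonempty (G ≃g graphJoin (⊤ : SimpleGraph (Fin s))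
            ((⊤ : SimpleGraph (Fin 1)) ⊕g (⊤ : SimpleGraph (Fin t)))))) := by
  subst hn
  rw [dimK_eq_card_sub_two_iff_isTwinExtremal hG (by omega) hk]
  refine ⟨IsTwinExtremal.exists_iso, ?_⟩
  rintro (⟨s, t, hs, ht, ⟨e⟩⟩ | ⟨s, t, hs, ht, ⟨e⟩⟩ | ⟨s, t, hs, ht, ⟨e⟩⟩)
  · have hst : 3 ≤ s + t := by
      have := Fintype.card_congr e.toEquiv
      simp only [Fintype.card_sum, Fintype.card_fin] at this
      omega
    exact (isTwinExtremal_completeBipartiteGraph hs ht hst).of_iso e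
  · exact (isTwinExtremal_graphJoin_top_bot hs ht).of_iso e
  · exact (isTwinExtremal_graphJoin_top_sum hs ht).of_iso e
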